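/- arXiv:2211.05249 — 2 statements merged into one kernel-verified Lean document; each statement's English description precedes it below -/
import Mathlib

section
/- Likelihood ratio characterization for the rounded, thresholded Laplace mechanism: fix ε > 0 and define, for n ∈ ℕ, p₀(n) and p₁(n) as follows: p₀(0) = ∫_{−∞}^{1/2} (ε/2)·exp(−ε|x|) dx and p₀(n) = ∫_{n−1/2}^{n+1/2} (ε/2)·exp(−ε|x|) dx for n ≥ 1; p₁(0) = ∫_{−∞}^{1/2} (ε/2)·exp(−ε|x−1|) dx and p₁(n) = ∫_{n−1/2}^{n+1/2} (ε/2)·exp(−ε|x−1|) dx for n ≥ 1. Then for every n ∈ ℕ, p₀(n) ≥ p₁(n) if and only if n = 0. -/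
/-!
The density of the Laplace law at location `μ` is a strictly decreasing function of `|x - μ|`,
so the density at location `0` dominates the one at location `1` exactly on the half-line
`x ≤ 1/2` of points closer to `0`. The bin of `0` is `(-∞, 1/2]`, where location `0` is
favoured; every other bin is an interval of positive length inside `(1/2, ∞)`, where
location `1` is strictly favoured.
-/

open MeasureTheory Real intervalIntegral

theorem abs_sub_lt_abs_sub_iff_midpoint_lt {μ ν x : ℝ} (hμν : μ < ν) :
    |x - ν| < |x - μ| ↔ (μ + ν) / 2 < x := by
  rw [← sq_lt_sq]
  constructor <;> intro h <;> nlinarith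

namespace Laplace

noncomputable def density (ε μ x : ℝ) : ℝ := ε / 2 * exp (-ε * |x - μ|)

variable {ε : ℝ}

theorem continuous_density (ε μ : ℝ) : Continuous (density ε μ) := by
  unfold density
  fun_prop

theorem density_lt_density_iff (hε : 0 < ε) {μ ν x : ℝ} :
    density ε μ x < density ε ν x ↔ |x - ν| < |x - μ| := by
  rw [density, density, mul_lt_mul_iff_right₀ (half_pos hε), exp_lt_exp,
    mul_lt_mul_left_of_neg (neg_lt_zero.2 hε)]

theorem density_le_of_le_midpoint (hε : 0 < ε) {μ ν x : ℝ} (hμν : μ < ν)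
    (hx : x ≤ (μ + ν) / 2) : density ε ν x ≤ density ε μ x := by
  rw [← not_lt, density_lt_density_iff hε, abs_sub_lt_abs_sub_iff_midpoint_lt hμν]
  exact hx.not_gt

theorem density_lt_of_midpoint_lt (hε : 0 < ε) {μ ν x : ℝ} (hμν : μ < ν)
    (hx : (μ + ν) / 2 < x) : density ε μ x < density ε ν x := by
  rwa [density_lt_density_iff hε, abs_sub_lt_abs_sub_iff_midpoint_lt hμν]

theorem integrableOn_Iic_density (hε : 0 < ε) (μ c : ℝ) :
    IntegrableOn (density ε μ) (Set.Iic c) := by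
  have hdom : IntegrableOn (fun x => ε / 2 * exp (-ε * μ) * exp (ε * x)) (Set.Iic c) :=
    (integrableOn_exp_mul_Iic hε c).const_mul _
  refine hdom.mono' (continuous_density ε μ).aestronglyMeasurable.restrict
    (ae_of_all _ fun x => ?_)
  have hexp : exp (-ε * |x - μ|) ≤ exp (-ε * μ) * exp (ε * x) := by
    rw [← exp_add, exp_le_exp]
    nlinarith [neg_abs_le (x - μ)]
  rw [norm_of_nonneg (by unfold density; positivity), density, mul_assoc]
  gcongr

theorem setIntegral_Iic_midpoint_density_le (hε : 0 < ε) {μ ν : ℝ} (hμν : μ < ν) :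
    ∫ x in Set.Iic ((μ + ν) / 2), density ε ν x ≤
      ∫ x in Set.Iic ((μ + ν) / 2), density ε μ x :=
  setIntegral_mono_on (integrableOn_Iic_density hε ν _) (integrableOn_Iic_density hε μ _)
    measurableSet_Iic fun _ hx => density_le_of_le_midpoint hε hμν hx

theorem intervalIntegral_density_lt_of_midpoint_le (hε : 0 < ε) {μ ν a b : ℝ} (hμν : μ < ν)
    (hab : a < b) (ha : (μ + ν) / 2 ≤ a) :
    ∫ x in a..b, density ε μ x < ∫ x in a..b, density ε ν x :=
  integral_lt_integral_of_continuousOn_of_le_of_exists_lt hab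
    (continuous_density ε μ).continuousOn (continuous_density ε ν).continuousOn
    (fun _ hx => (density_lt_of_midpoint_lt hε hμν (ha.trans_lt hx.1)).le)
    ⟨b, Set.right_mem_Icc.2 hab.le, density_lt_of_midpoint_lt hε hμν (ha.trans_lt hab)⟩

end Laplace

/-- Likelihood ratio characterization for the rounded, thresholded Laplace
mechanism: the bin probability under location `0` is at least the bin
probability under location `1` exactly at the bin `n = 0`. -/
theorem laplace_likelihood_ratio_characterization (ε : ℝ) (hε : 0 < ε)
    (p₀ p₁ : ℕ → ℝ)
    (hp₀ : ∀ n : ℕ,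
      p₀ n = if n = 0 then ∫ x in Set.Iic (1 / 2 : ℝ), (ε / 2) * Real.exp (-ε * |x|)
        else ∫ x in ((n : ℝ) - 1 / 2)..((n : ℝ) + 1 / 2), (ε / 2) * Real.exp (-ε * |x|))
    (hp₁ : ∀ n : ℕ,
      p₁ n = if n = 0 then ∫ x in Set.Iic (1 / 2 : ℝ), (ε / 2) * Real.exp (-ε * |x - 1|)
        else ∫ x in ((n : ℝ) - 1 / 2)..((n : ℝ) + 1 / 2), (ε / 2) * Real.exp (-ε * |x - 1|)) :
    ∀ n : ℕ, p₀ n ≥ p₁ n ↔ n = 0 := by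
  have hd₀ : (fun x : ℝ => ε / 2 * exp (-ε * |x|)) = Laplace.density ε 0 :=
    funext fun x => by rw [Laplace.density, sub_zero]
  have hd₁ : (fun x : ℝ => ε / 2 * exp (-ε * |x - 1|)) = Laplace.density ε 1 := rfl
  intro n
  rcases Nat.eq_zero_or_pos n with rfl | hn
  · have hmid : ((0 : ℝ) + 1) / 2 = 1 / 2 := by norm_num
    refine iff_of_true ?_ rfl
    rw [hp₀, hp₁, if_pos rfl, if_pos rfl, hd₀, hd₁, ← hmid]
    exact Laplace.setIntegral_Iic_midpoint_density_le hε zero_lt_one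
  · have hn' : (1 : ℝ) ≤ n := by exact_mod_cast hn
    refine iff_of_false (not_le.2 ?_) hn.ne'
    rw [hp₀, hp₁, if_neg hn.ne', if_neg hn.ne', hd₀, hd₁]
    exact Laplace.intervalIntegral_density_lt_of_midpoint_le hε zero_lt_one (by linarith)
      (by linarith)
end

section
/- Difference-attack counting identity: Let U be a type with decidable equality, D a finite set of users (a Finset of U), n a natural number, V a type, known : U → Fin n → V the known attributes, secret : U → Bool the sensitive attribute, t ∈ D a target user, A' a finite set of attribute indices (a Finset of Fin n), i' an attribute index with i' ∉ A', and s : Bool. Suppose t is uniquely identified in D by (A', i'): for every u ∈ D, if known u i = known t i for all i ∈ A' and known u i' = known t i', then u = t. Let Q₁ be the set of u ∈ D with known u i = known t i for all i ∈ A' and secret u = s, and let Q₂ be the set of u ∈ D with known u i = known t i for all i ∈ A', secret u = s, and known u i' ≠ known t i'. Then Q₂ ⊆ Q₁ and Q₁.card − Q₂.card = (if secret t = s then 1 else 0). -/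
/-- Difference-attack counting identity: if the target `t` is uniquely
identified in the dataset `D` by the attributes `A' ∪ {i'}`, then the counts
of the two difference queries differ by `1` exactly when the target's
sensitive attribute equals `s`. -/
theorem difference_attack_counts
    {U : Type*} [DecidableEq U] {V : Type*} [DecidableEq V]
    (D : Finset U) (n : ℕ) (known : U → Fin n → V) (secret : U → Bool)
    (t : U) (ht : t ∈ D) (A' : Finset (Fin n)) (i' : Fin n) (hi' : i' ∉ A')
    (s : Bool)
    (huniq : ∀ u ∈ D,
      (∀ i ∈ A', known u i = known t i) → known u i' = known t i' → u = t) :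
    (D.filter (fun u =>
        (∀ i ∈ A', known u i = known t i) ∧ secret u = s ∧
          known u i' ≠ known t i')) ⊆
      (D.filter (fun u =>
        (∀ i ∈ A', known u i = known t i) ∧ secret u = s)) ∧
    (D.filter (fun u =>
        (∀ i ∈ A', known u i = known t i) ∧ secret u = s)).card -
      (D.filter (fun u =>
        (∀ i ∈ A', known u i = known t i) ∧ secret u = s ∧
          known u i' ≠ known t i')).card =
      (if secret t = s then 1 else 0) := by
  classical
  have hsub : (D.filter (fun u =>
        (∀ i ∈ A', known u i = known t i) ∧ secret u = s ∧
          known u i' ≠ known t i')) ⊆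
      (D.filter (fun u =>
        (∀ i ∈ A', known u i = known t i) ∧ secret u = s)) := by
    intro u hu
    simp only [Finset.mem_filter] at hu ⊢
    exact ⟨hu.1, hu.2.1, hu.2.2.1⟩
  refine ⟨hsub, ?_⟩
  rw [← Finset.card_sdiff_of_subset hsub]
  have hset : (D.filter (fun u =>
        (∀ i ∈ A', known u i = known t i) ∧ secret u = s)) \
      (D.filter (fun u =>
        (∀ i ∈ A', known u i = known t i) ∧ secret u = s ∧
          known u i' ≠ known t i')) =
      if secret t = s then {t} else ∅ := by
    ext u
    simp only [Finset.mem_sdiff, Finset.mem_filter, not_and, not_not]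
    constructor
    · rintro ⟨⟨huD, hA, hs⟩, h2⟩
      have : known u i' = known t i' := by
        by_contra hne
        exact hne (h2 huD hA hs)
      have hut := huniq u huD hA this
      subst hut
      simp [hs]
    · intro hu
      split_ifs at hu with hts
      · simp only [Finset.mem_singleton] at hu
        subst hu
        exact ⟨⟨ht, fun i _ => rfl, hts⟩, fun _ _ _ => rfl⟩
      · simp at hu
  rw [hset]
  split_ifs <;> simp
end
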